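/- arXiv:2403.13846 — 3 statements merged into one kernel-verified Lean document; each statement's English description precedes it below -/
import Mathlib

section
/- Let G be a finite simple graph on vertex set V with at least one edge, and let V_i, V_j ⊆ V be disjoint subsets, each of positive volume, such that no edge of G joins a vertex of V_i to a vertex of V_j. Then Δ_{(i,j)} = D_{V_i} + D_{V_j} − D_{V_i ∪ V_j} ≥ 0. -/
open Finset Real

variable {V : Type*}

/-- Volume of a vertex subset: the sum of the degrees of its vertices. -/
noncomputable def gvol [Fintype V] (G : SimpleGraph V) [DecidableRel G.Adj] (S : Finset V) : ℕ :=
  ∑ v ∈ S, G.degree v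

/-- Number of edges of `G` with exactly one endpoint in `S` (each such edge has a
unique orientation going from inside `S` to outside `S`). -/
def cutEdges [Fintype V] [DecidableEq V] (G : SimpleGraph V) [DecidableRel G.Adj]
    (S : Finset V) : ℕ :=
  (Finset.univ.filter (fun p : V × V => G.Adj p.1 p.2 ∧ p.1 ∈ S ∧ p.2 ∉ S)).card

/-- Decoding-information contribution `D_S` of a vertex set `S`. -/
noncomputable def Dterm [Fintype V] [DecidableEq V] (G : SimpleGraph V) [DecidableRel G.Adj]
    (S : Finset V) : ℝ :=
  -(((gvol G S : ℝ) - (cutEdges G S : ℝ)) / (gvol G Finset.univ : ℝ)) *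
    Real.logb 2 ((gvol G S : ℝ) / (gvol G Finset.univ : ℝ))

/-!
With no edge between `Vi` and `Vj`, both the volume and the cut size are additive on
`Vi ∪ Vj`, with union volume `W = vol Vi + vol Vj`. Hence `Δ` splits as
`(vol Vi - g Vi)/vol G · log (W / vol Vi) + (vol Vj - g Vj)/vol G · log (W / vol Vj)`,
and each summand is nonnegative because `g S ≤ vol S` and the logarithm is monotone.
-/

/-- `D_S` with `vol(G) = M`, `vol(S) = x`, `g(S) = g` and logarithms to base `β`. -/
noncomputable def decodingTerm (β M x g : ℝ) : ℝ :=
  -((x - g) / M) * logb β (x / M)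

theorem decodingTerm_add_sub_nonneg {β M a b ga gb : ℝ} (hβ : 1 < β) (hM : 0 < M)
    (ha : 0 < a) (hb : 0 < b) (hga : ga ≤ a) (hgb : gb ≤ b) :
    0 ≤ decodingTerm β M a ga + decodingTerm β M b gb - decodingTerm β M (a + b) (ga + gb) := by
  have hsplit : decodingTerm β M a ga + decodingTerm β M b gb - decodingTerm β M (a + b) (ga + gb)
      = (a - ga) / M * (logb β ((a + b) / M) - logb β (a / M))
        + (b - gb) / M * (logb β ((a + b) / M) - logb β (b / M)) := by
    unfold decodingTerm; ring
  have hlog : ∀ x, 0 < x → x ≤ a + b → logb β (x / M) ≤ logb β ((a + b) / M) := fun x hx hxab =>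
    logb_le_logb_of_le hβ (by positivity) (div_le_div_of_nonneg_right hxab hM.le)
  have hwa : 0 ≤ (a - ga) / M := div_nonneg (sub_nonneg.2 hga) hM.le
  have hwb : 0 ≤ (b - gb) / M := div_nonneg (sub_nonneg.2 hgb) hM.le
  rw [hsplit]
  exact add_nonneg (mul_nonneg hwa (sub_nonneg.2 (hlog a ha (by linarith))))
    (mul_nonneg hwb (sub_nonneg.2 (hlog b hb (by linarith))))

section
variable [Fintype V] (G : SimpleGraph V) [DecidableRel G.Adj]

theorem gvol_le_gvol_univ (S : Finset V) : gvol G S ≤ gvol G univ :=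
  sum_le_sum_of_subset (subset_univ S)

variable [DecidableEq V]

theorem Dterm_eq_decodingTerm (S : Finset V) :
    Dterm G S = decodingTerm 2 (gvol G univ) (gvol G S) (cutEdges G S) :=
  rfl

theorem gvol_union {s t : Finset V} (hst : Disjoint s t) :
    gvol G (s ∪ t) = gvol G s + gvol G t :=
  sum_union hst

theorem cutEdges_le_gvol (S : Finset V) : cutEdges G S ≤ gvol G S :=
  calc cutEdges G S
      ≤ #(S.biUnion fun u => (G.neighborFinset u).map (Function.Embedding.sectR u V)) := by
        refine card_le_card fun p hp => ?_
        simp only [mem_filter, mem_univ, true_and] at hp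
        simp only [mem_biUnion, mem_map, SimpleGraph.mem_neighborFinset]
        exact ⟨p.1, hp.2.1, p.2, hp.1, rfl⟩
    _ ≤ ∑ u ∈ S, #((G.neighborFinset u).map (Function.Embedding.sectR u V)) := card_biUnion_le
    _ = gvol G S := by simp [gvol]

theorem cutEdges_union_of_forall_not_adj {s t : Finset V} (hst : Disjoint s t)
    (hadj : ∀ u ∈ s, ∀ v ∈ t, ¬ G.Adj u v) :
    cutEdges G (s ∪ t) = cutEdges G s + cutEdges G t := by
  have hdisj := disjoint_left.1 hst
  unfold cutEdges
  rw [← card_union_of_disjoint (disjoint_filter.2 fun _ _ hs ht => hdisj hs.2.1 ht.2.1),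
    ← filter_or]
  congr 1
  ext ⟨u, v⟩
  simp only [mem_filter, mem_univ, true_and, mem_union]
  grind [G.adj_symm]

end

theorem delta_nonneg_of_no_edge_general [Fintype V] [DecidableEq V]
    (G : SimpleGraph V) [DecidableRel G.Adj]
    (Vi Vj : Finset V) (hdisj : Disjoint Vi Vj)
    (hvi : 0 < gvol G Vi) (hvj : 0 < gvol G Vj)
    (hno : ∀ u ∈ Vi, ∀ v ∈ Vj, ¬ G.Adj u v) :
    0 ≤ Dterm G Vi + Dterm G Vj - Dterm G (Vi ∪ Vj) := by
  have hvol : 0 < gvol G univ := hvi.trans_le (gvol_le_gvol_univ G Vi)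
  simp only [Dterm_eq_decodingTerm, gvol_union G hdisj,
    cutEdges_union_of_forall_not_adj G hdisj hno, Nat.cast_add]
  exact decodingTerm_add_sub_nonneg one_lt_two (Nat.cast_pos.2 hvol) (Nat.cast_pos.2 hvi)
    (Nat.cast_pos.2 hvj) (Nat.cast_le.2 (cutEdges_le_gvol G Vi))
    (Nat.cast_le.2 (cutEdges_le_gvol G Vj))

/-- Theorem 1 of the paper: if no edge joins the disjoint sets `Vi` and `Vj`, then
`Δ_{(i,j)} = D_{Vi} + D_{Vj} − D_{Vi ∪ Vj} ≥ 0`. -/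
theorem delta_nonneg_of_no_edge [Fintype V] [DecidableEq V]
    (G : SimpleGraph V) [DecidableRel G.Adj]
    (hE : G.edgeFinset.Nonempty)
    (Vi Vj : Finset V) (hdisj : Disjoint Vi Vj)
    (hvi : 0 < gvol G Vi) (hvj : 0 < gvol G Vj)
    (hno : ∀ u ∈ Vi, ∀ v ∈ Vj, ¬ G.Adj u v) :
    0 ≤ Dterm G Vi + Dterm G Vj - Dterm G (Vi ∪ Vj) :=
  delta_nonneg_of_no_edge_general G Vi Vj hdisj hvi hvj hno
end

section
/- Let G be a finite simple graph on vertex set V with at least one edge, and let V_i, V_j ⊆ V be disjoint subsets of positive volume with no edge of G joining V_i to V_j. Then vol(G)·Δ_{(i,j)} = −(vol(V_i) − g(V_i))·log₂(vol(V_i)/(vol(V_i)+vol(V_j))) − (vol(V_j) − g(V_j))·log₂(vol(V_j)/(vol(V_i)+vol(V_j))). -/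
open Finset Real

variable {V : Type*}

/-- The main computation in the proof of Theorem 1:
`vol(G)·Δ_{(i,j)} = −(vol(V_i) − g(V_i))·log₂(vol(V_i)/(vol(V_i)+vol(V_j)))
                   − (vol(V_j) − g(V_j))·log₂(vol(V_j)/(vol(V_i)+vol(V_j)))`. -/
theorem volG_mul_delta_eq [Fintype V] [DecidableEq V]
    (G : SimpleGraph V) [DecidableRel G.Adj]
    (hE : G.edgeFinset.Nonempty)
    (Vi Vj : Finset V) (hdisj : Disjoint Vi Vj)
    (hvi : 0 < gvol G Vi) (hvj : 0 < gvol G Vj)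
    (hno : ∀ u ∈ Vi, ∀ v ∈ Vj, ¬ G.Adj u v) :
    (gvol G Finset.univ : ℝ) * (Dterm G Vi + Dterm G Vj - Dterm G (Vi ∪ Vj)) =
      -(((gvol G Vi : ℝ) - (cutEdges G Vi : ℝ)) *
          Real.logb 2 ((gvol G Vi : ℝ) / ((gvol G Vi : ℝ) + (gvol G Vj : ℝ))))
      - ((gvol G Vj : ℝ) - (cutEdges G Vj : ℝ)) *
          Real.logb 2 ((gvol G Vj : ℝ) / ((gvol G Vi : ℝ) + (gvol G Vj : ℝ))) := by
  classical
  -- volumes add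
  have hvolU : gvol G (Vi ∪ Vj) = gvol G Vi + gvol G Vj := by
    simpa [gvol] using Finset.sum_union hdisj
  -- cut edges add
  have hcutU : cutEdges G (Vi ∪ Vj) = cutEdges G Vi + cutEdges G Vj := by
    unfold cutEdges
    have hfi : (Finset.univ.filter (fun p : V × V => G.Adj p.1 p.2 ∧ p.1 ∈ Vi ∧ p.2 ∉ Vi))
        = Finset.univ.filter (fun p : V × V => G.Adj p.1 p.2 ∧ p.1 ∈ Vi ∧ p.2 ∉ Vi ∪ Vj) := by
      ext p
      simp only [Finset.mem_filter, Finset.mem_univ, true_and, Finset.mem_union]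
      constructor
      · rintro ⟨ha, h1, h2⟩
        exact ⟨ha, h1, fun h => h.elim h2 (fun hj => hno _ h1 _ hj ha)⟩
      · rintro ⟨ha, h1, h2⟩
        exact ⟨ha, h1, fun h => h2 (Or.inl h)⟩
    have hfj : (Finset.univ.filter (fun p : V × V => G.Adj p.1 p.2 ∧ p.1 ∈ Vj ∧ p.2 ∉ Vj))
        = Finset.univ.filter (fun p : V × V => G.Adj p.1 p.2 ∧ p.1 ∈ Vj ∧ p.2 ∉ Vi ∪ Vj) := by
      ext p
      simp only [Finset.mem_filter, Finset.mem_univ, true_and, Finset.mem_union]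
      constructor
      · rintro ⟨ha, h1, h2⟩
        exact ⟨ha, h1, fun h => h.elim (fun hi => hno _ hi _ h1 ha.symm) h2⟩
      · rintro ⟨ha, h1, h2⟩
        exact ⟨ha, h1, fun h => h2 (Or.inr h)⟩
    have hU : (Finset.univ.filter (fun p : V × V => G.Adj p.1 p.2 ∧ p.1 ∈ Vi ∪ Vj ∧ p.2 ∉ Vi ∪ Vj))
        = (Finset.univ.filter (fun p : V × V => G.Adj p.1 p.2 ∧ p.1 ∈ Vi ∧ p.2 ∉ Vi ∪ Vj))
          ∪ (Finset.univ.filter (fun p : V × V => G.Adj p.1 p.2 ∧ p.1 ∈ Vj ∧ p.2 ∉ Vi ∪ Vj)) := by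
      ext p
      simp only [Finset.mem_filter, Finset.mem_univ, true_and, Finset.mem_union]
      tauto
    have hdisj2 : Disjoint
        (Finset.univ.filter (fun p : V × V => G.Adj p.1 p.2 ∧ p.1 ∈ Vi ∧ p.2 ∉ Vi ∪ Vj))
        (Finset.univ.filter (fun p : V × V => G.Adj p.1 p.2 ∧ p.1 ∈ Vj ∧ p.2 ∉ Vi ∪ Vj)) := by
      rw [Finset.disjoint_left]
      intro p hp hq
      simp only [Finset.mem_filter] at hp hq
      exact (Finset.disjoint_left.mp hdisj hp.2.2.1) hq.2.2.1
    rw [hU, Finset.card_union_of_disjoint hdisj2, hfi, hfj]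
  -- positivity
  set a : ℝ := (gvol G Vi : ℝ) with ha_def
  set b : ℝ := (gvol G Vj : ℝ) with hb_def
  set T : ℝ := (gvol G Finset.univ : ℝ) with hT_def
  have ha : 0 < a := by rw [ha_def]; exact_mod_cast hvi
  have hb : 0 < b := by rw [hb_def]; exact_mod_cast hvj
  have hab : 0 < a + b := by linarith
  have hT : 0 < T := by
    have h1 : gvol G Vi ≤ gvol G Finset.univ := by
      apply Finset.sum_le_sum_of_subset (Finset.subset_univ Vi)
    have : (0:ℕ) < gvol G Finset.univ := lt_of_lt_of_le hvi h1
    rw [hT_def]; exact_mod_cast this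
  have hLa : Real.logb 2 (a / T) = Real.logb 2 (a / (a + b)) + Real.logb 2 ((a + b) / T) := by
    rw [← Real.logb_mul (by positivity) (by positivity)]
    congr 1
    field_simp
  have hLb : Real.logb 2 (b / T) = Real.logb 2 (b / (a + b)) + Real.logb 2 ((a + b) / T) := by
    rw [← Real.logb_mul (by positivity) (by positivity)]
    congr 1
    field_simp
  simp only [Dterm, ← ha_def, ← hb_def, ← hT_def, hvolU, hcutU, Nat.cast_add, ← ha_def]
  rw [show ((gvol G Vi : ℝ) + (gvol G Vj : ℝ)) = a + b from rfl] at *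
  rw [hLa, hLb]
  have hT' : T ≠ 0 := ne_of_gt hT
  field_simp
  ring
end

section
/- Let G be a finite simple graph on vertex set V in which every vertex has positive degree, and let P = {V₁,…,V_L} be a partition of V into nonempty blocks. Then H₁(G) − H₂^P(G) = −Σ_{j=1}^{L} ((vol(V_j) − g(V_j))/vol(G))·log₂(vol(V_j)/vol(G)); that is, the decoding information of the partition equals Σ_j D_{V_j}. -/
open Finset Real

variable {V : Type*}

/-- The entropy kernel `f(x) = −x·log₂ x` (with `f(0) = 0`, since `log₂ 0 = 0` in Lean). -/
noncomputable def fent (x : ℝ) : ℝ := -x * Real.logb 2 x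

/-- One-dimensional structural information `H₁(G)`. -/
noncomputable def H1 [Fintype V] (G : SimpleGraph V) [DecidableRel G.Adj] : ℝ :=
  ∑ v : V, fent ((G.degree v : ℝ) / (gvol G Finset.univ : ℝ))

/-- Partition-based two-dimensional structural information `H₂^P(G)`, where the
partition is given by its finite set of blocks. -/
noncomputable def H2P [Fintype V] [DecidableEq V] (G : SimpleGraph V) [DecidableRel G.Adj]
    (parts : Finset (Finset V)) : ℝ :=
  ∑ B ∈ parts,
    ((gvol G B : ℝ) / (gvol G Finset.univ : ℝ) *
        ∑ v ∈ B, fent ((G.degree v : ℝ) / (gvol G B : ℝ))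
      + (cutEdges G B : ℝ) / (gvol G B : ℝ) *
        fent ((gvol G B : ℝ) / (gvol G Finset.univ : ℝ)))

/-- Equation (8) of the paper: for a graph in which every vertex has positive degree
and a partition `P` of the vertex set into nonempty blocks,
`H₁(G) − H₂^P(G) = −Σ_j ((vol(V_j) − g(V_j))/vol(G))·log₂(vol(V_j)/vol(G))`. -/
theorem decoding_information_eq [Fintype V] [DecidableEq V]
    (G : SimpleGraph V) [DecidableRel G.Adj]
    (hdeg : ∀ v : V, 0 < G.degree v)
    (P : Finpartition (Finset.univ : Finset V)) :
    H1 G - H2P G P.parts =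
      -∑ B ∈ P.parts,
        (((gvol G B : ℝ) - (cutEdges G B : ℝ)) / (gvol G Finset.univ : ℝ)) *
          Real.logb 2 ((gvol G B : ℝ) / (gvol G Finset.univ : ℝ)) := by
  classical
  cases isEmpty_or_nonempty V with
  | inl h =>
    have hparts : P.parts = ∅ := by
      ext B
      simp only [Finset.notMem_empty, iff_false]
      intro hB
      obtain ⟨v, -⟩ := P.nonempty_of_mem_parts hB
      exact h.false v
    simp [H1, H2P, hparts]
  | inr h =>
    have hvol : 0 < gvol G Finset.univ :=
      Finset.sum_pos (fun v _ => hdeg v) ⟨h.some, Finset.mem_univ h.some⟩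
    set n : ℝ := (gvol G Finset.univ : ℝ) with hn
    have hnpos : (0:ℝ) < n := by rw [hn]; exact_mod_cast hvol
    have key : ∀ (m : ℝ), 0 < m → ∀ d : ℝ, 0 < d →
        fent (d / n) = (m / n) * fent (d / m) - (d / n) * Real.logb 2 (m / n) := by
      intro m hm d hd
      have h1 : d / n = (d / m) * (m / n) := by field_simp
      rw [fent, fent, h1, Real.logb_mul (by positivity) (by positivity)]
      ring
    have hsplit : ∀ F : V → ℝ, ∑ v : V, F v = ∑ B ∈ P.parts, ∑ v ∈ B, F v := by
      intro F
      have h2 := Finset.sum_biUnion (s := P.parts) (t := id) (f := F)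
        P.supIndep.pairwiseDisjoint
      rw [P.biUnion_parts] at h2
      simpa using h2
    have main : ∀ B ∈ P.parts,
        (∑ v ∈ B, fent ((G.degree v : ℝ) / n))
          - ((gvol G B : ℝ)/n * ∑ v ∈ B, fent ((G.degree v : ℝ)/(gvol G B : ℝ))
            + (cutEdges G B : ℝ)/(gvol G B : ℝ) * fent ((gvol G B : ℝ)/n))
        = -((((gvol G B : ℝ) - (cutEdges G B : ℝ))/n) *
            Real.logb 2 ((gvol G B : ℝ)/n)) := by
      intro B hB
      have hBne := P.nonempty_of_mem_parts hB
      have hm : 0 < (gvol G B : ℝ) := by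
        have : 0 < gvol G B := Finset.sum_pos (fun v _ => hdeg v) hBne
        exact_mod_cast this
      have hc : ((gvol G B : ℕ) : ℝ) = ∑ v ∈ B, (G.degree v : ℝ) := by
        simp [gvol]
      have hsum : ∑ v ∈ B, fent ((G.degree v : ℝ) / n)
          = (gvol G B : ℝ)/n * ∑ v ∈ B, fent ((G.degree v : ℝ)/(gvol G B : ℝ))
            - (gvol G B : ℝ)/n * Real.logb 2 ((gvol G B : ℝ)/n) := by
        rw [Finset.sum_congr rfl
            (fun v _ => key _ hm _ (by exact_mod_cast hdeg v)),
          Finset.sum_sub_distrib, ← Finset.mul_sum]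
        congr 1
        rw [← Finset.sum_mul, ← Finset.sum_div, ← hc]
      rw [hsum, fent]
      have hm' : (gvol G B : ℝ) ≠ 0 := hm.ne'
      field_simp
      ring
    rw [H1, H2P, hsplit, ← Finset.sum_sub_distrib,
      Finset.sum_congr rfl main, ← Finset.sum_neg_distrib]
end
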